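/- The zeta function ξ^{G₂/P_short} of (G₂, P_short) over ℚ satisfies the standard functional equation: for every complex number s such that neither s nor 1−s lies in the exceptional set S₂ = {−2, −1, 0, 1/2, 1, 2, 3}, one has ξ^{G₂/P_short}(1−s) = ξ^{G₂/P_short}(s). -/
import Mathlib

open Complex

noncomputable def xiG2Pshort (s : ℂ) : ℂ :=
  completedRiemannZeta 2 * completedRiemannZeta (s + 2) * completedRiemannZeta (2 * s) / (s - 3)
  - completedRiemannZeta 2 * completedRiemannZeta (s - 2) * completedRiemannZeta (2 * s - 1) /
      (s + 2)
  + completedRiemannZeta (s - 2) * completedRiemannZeta (2 * s - 1) / (2 * s - 2)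
  - completedRiemannZeta (s + 2) * completedRiemannZeta (2 * s) / (2 * s)
  - completedRiemannZeta (s - 1) * completedRiemannZeta (2 * s - 1) / (s * (s - 3))
  - completedRiemannZeta (s + 1) * completedRiemannZeta (2 * s) / ((s - 1) * (s + 2))
  - completedRiemannZeta s * completedRiemannZeta (2 * s) / ((2 * s - 2) * (s + 1))
  - completedRiemannZeta s * completedRiemannZeta (2 * s - 1) / ((2 * s) * (s - 2))

def S2 : Set ℂ := {-2, -1, 0, 1/2, 1, 2, 3}

theorem xiG2Pshort_functional_equation (s : ℂ) (hs : s ∉ S2) (hs' : (1 - s) ∉ S2) :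
    xiG2Pshort (1 - s) = xiG2Pshort s := by
  have z1 : completedRiemannZeta ((1 - s) + 2) = completedRiemannZeta (s - 2) := by
    rw [show (1 - s) + 2 = 1 - (s - 2) by ring, completedRiemannZeta_one_sub]
  have z2 : completedRiemannZeta ((1 - s) - 2) = completedRiemannZeta (s + 2) := by
    rw [show (1 - s) - 2 = 1 - (s + 2) by ring, completedRiemannZeta_one_sub]
  have z3 : completedRiemannZeta ((1 - s) - 1) = completedRiemannZeta (s + 1) := by
    rw [show (1 - s) - 1 = 1 - (s + 1) by ring, completedRiemannZeta_one_sub]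
  have z4 : completedRiemannZeta ((1 - s) + 1) = completedRiemannZeta (s - 1) := by
    rw [show (1 - s) + 1 = 1 - (s - 1) by ring, completedRiemannZeta_one_sub]
  have z5 : completedRiemannZeta (2 * (1 - s) - 1) = completedRiemannZeta (2 * s) := by
    rw [show 2 * (1 - s) - 1 = 1 - 2 * s by ring, completedRiemannZeta_one_sub]
  have z6 : completedRiemannZeta (2 * (1 - s)) = completedRiemannZeta (2 * s - 1) := by
    rw [show 2 * (1 - s) = 1 - (2 * s - 1) by ring, completedRiemannZeta_one_sub]
  have z7 : completedRiemannZeta (1 - s) = completedRiemannZeta s :=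
    completedRiemannZeta_one_sub s
  unfold xiG2Pshort
  rw [z1, z2, z3, z4, z5, z6, z7,
    show (1 - s) * ((1 - s) - 3) = (s - 1) * (s + 2) by ring,
    show ((1 - s) - 1) * ((1 - s) + 2) = s * (s - 3) by ring,
    show (2 * (1 - s) - 2) * ((1 - s) + 1) = (2 * s) * (s - 2) by ring,
    show (2 * (1 - s)) * ((1 - s) - 2) = (2 * s - 2) * (s + 1) by ring,
    show (1 - s) - 3 = -(s + 2) by ring,
    show (1 - s) + 2 = -(s - 3) by ring,
    show 2 * (1 - s) - 2 = -(2 * s) by ring,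
    show 2 * (1 - s) = -(2 * s - 2) by ring,
    div_neg, div_neg, div_neg, div_neg]
  ring
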